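/- arXiv:1708.06298 — 3 statements merged into one kernel-verified Lean document; each statement's English description precedes it below -/
import Mathlib

section
/- For any positive semidefinite Hermitian operators M, N on C^{D_1} ⊗ C^{D_2} (n = 2 parties) and T = {1,2}, the shadow inequality holds: Tr(M)Tr(N) − Tr[Tr_2(M)Tr_2(N)] − Tr[Tr_1(M)Tr_1(N)] + Tr(MN) ≥ 0. -/
open Matrix BigOperators ComplexOrder

/-- Partial trace over the second factor. -/
noncomputable def ptrace2 {A B : Type*} [Fintype B] (M : Matrix (A × B) (A × B) ℂ) :
    Matrix A A ℂ :=
  Matrix.of fun i j => ∑ k, M (i, k) (j, k)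

/-- Partial trace over the first factor. -/
noncomputable def ptrace1 {A B : Type*} [Fintype A] (M : Matrix (A × B) (A × B) ℂ) :
    Matrix B B ℂ :=
  Matrix.of fun i j => ∑ k, M (k, i) (k, j)

/-!
Each of the four terms is `Tr[(M ⊗ N) X]` with `X` the identity, the swap `S₁` of the two
`ℂ^{D₁}` factors, the swap `S₂` of the two `ℂ^{D₂}` factors, or their product, the full swap.
So the expression is `Tr[(M ⊗ N)((1 - S₁) ⊗ (1 - S₂))]`. A swap `S` is a self-adjoint
involution, so `(1 - S)ᴴ(1 - S) = 2(1 - S)` and `1 - S` is positive semidefinite; hence so is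
`(1 - S₁) ⊗ (1 - S₂)`, and the trace of a product of positive semidefinite matrices is nonnegative.
-/

open scoped Kronecker MatrixOrder

namespace Matrix

variable {n 𝕜 : Type*} [Fintype n] [RCLike 𝕜]

theorem PosSemidef.trace_mul_nonneg {A B : Matrix n n 𝕜} (hA : A.PosSemidef)
    (hB : B.PosSemidef) : 0 ≤ trace (A * B) := by
  classical
  obtain ⟨R, rfl⟩ := CStarAlgebra.nonneg_iff_eq_star_mul_self.mp hA.nonneg
  rw [star_eq_conjTranspose, Matrix.mul_assoc, trace_mul_comm]
  exact (hB.mul_mul_conjTranspose_same R).trace_nonneg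

theorem posSemidef_one_sub_permMatrix [DecidableEq n] {σ : Equiv.Perm n}
    (hσ : Function.Involutive σ) : (1 - σ.permMatrix 𝕜).PosSemidef := by
  have hσσ : σ * σ = 1 := Equiv.ext hσ
  have hsq : σ.permMatrix 𝕜 * σ.permMatrix 𝕜 = 1 := by
    rw [← permMatrix_mul, hσσ, permMatrix_one]
  have hgram : (1 - σ.permMatrix 𝕜)ᴴ * (1 - σ.permMatrix 𝕜) =
      (2 : 𝕜) • (1 - σ.permMatrix 𝕜) := by
    rw [conjTranspose_sub, conjTranspose_one, conjTranspose_permMatrix,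
      inv_eq_of_mul_eq_one_right hσσ, sub_mul, mul_sub, mul_sub, hsq, two_smul]
    simp only [Matrix.one_mul, Matrix.mul_one]
    abel
  have hhalf := (posSemidef_conjTranspose_mul_self (1 - σ.permMatrix 𝕜)).smul
    (a := (2 : 𝕜)⁻¹) (by positivity)
  rwa [hgram, smul_smul, inv_mul_cancel₀ two_ne_zero, one_smul] at hhalf

end Matrix

section TwoParties

variable {A B : Type*}

abbrev swapMatrix (A : Type*) [DecidableEq A] : Matrix (A × A) (A × A) ℂ :=
  Equiv.Perm.permMatrix ℂ (Equiv.prodComm A A)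

theorem posSemidef_one_sub_swapMatrix [Fintype A] [DecidableEq A] :
    (1 - swapMatrix A).PosSemidef :=
  posSemidef_one_sub_permMatrix fun _ => rfl

/-- `X ⊗ₖ Y` reindexed from `(A × A) × (B × B)` to `(A × B) × (A × B)`, the index type
of `M ⊗ₖ N` for `M N : Matrix (A × B) (A × B) _`. -/
def regroupKronecker {R : Type*} [Mul R] (X : Matrix (A × A) (A × A) R)
    (Y : Matrix (B × B) (B × B) R) : Matrix ((A × B) × (A × B)) ((A × B) × (A × B)) R :=
  (X ⊗ₖ Y).submatrix (Equiv.prodProdProdComm A B A B) (Equiv.prodProdProdComm A B A B)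

theorem regroupKronecker_sub_left {R : Type*} [NonUnitalNonAssocRing R]
    (X X' : Matrix (A × A) (A × A) R) (Y : Matrix (B × B) (B × B) R) :
    regroupKronecker (X - X') Y = regroupKronecker X Y - regroupKronecker X' Y := by
  ext; simp [regroupKronecker, sub_mul]

theorem regroupKronecker_sub_right {R : Type*} [NonUnitalNonAssocRing R]
    (X : Matrix (A × A) (A × A) R) (Y Y' : Matrix (B × B) (B × B) R) :
    regroupKronecker X (Y - Y') = regroupKronecker X Y - regroupKronecker X Y' := by
  ext; simp [regroupKronecker, mul_sub]

theorem Matrix.PosSemidef.regroupKronecker [Fintype A] [Fintype B] {𝕜 : Type*} [RCLike 𝕜]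
    {X : Matrix (A × A) (A × A) 𝕜} {Y : Matrix (B × B) (B × B) 𝕜} (hX : X.PosSemidef)
    (hY : Y.PosSemidef) : (regroupKronecker X Y).PosSemidef :=
  (hX.kronecker hY).submatrix _

variable [Fintype A] [Fintype B] [DecidableEq A] [DecidableEq B]
  (M N : Matrix (A × B) (A × B) ℂ)

theorem trace_kronecker_mul_regroupKronecker_one_one :
    trace (M ⊗ₖ N * regroupKronecker 1 1) = trace M * trace N := by
  simp [regroupKronecker, trace, Fintype.sum_prod_type, Finset.sum_mul_sum,
    Finset.sum_comm (γ := A) (α := B)]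

theorem trace_kronecker_mul_regroupKronecker_swap_one :
    trace (M ⊗ₖ N * regroupKronecker (swapMatrix A) 1) = trace (ptrace2 M * ptrace2 N) := by
  simp [regroupKronecker, trace, Matrix.mul_apply, ptrace2, Fintype.sum_prod_type,
    Matrix.one_apply, ite_and, Finset.sum_mul_sum, Finset.sum_comm (γ := A) (α := B)]

theorem trace_kronecker_mul_regroupKronecker_one_swap :
    trace (M ⊗ₖ N * regroupKronecker 1 (swapMatrix B)) = trace (ptrace1 M * ptrace1 N) := by
  simp [regroupKronecker, trace, Matrix.mul_apply, ptrace1, Fintype.sum_prod_type,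
    Matrix.one_apply, ite_and, Finset.sum_mul_sum, Finset.sum_comm (γ := A) (α := B)]

theorem trace_kronecker_mul_regroupKronecker_swap_swap :
    trace (M ⊗ₖ N * regroupKronecker (swapMatrix A) (swapMatrix B)) = trace (M * N) := by
  simp [regroupKronecker, trace, Matrix.mul_apply, Fintype.sum_prod_type, ite_and,
    Finset.sum_comm (γ := A) (α := B)]

theorem shadow_expression_eq_trace_kronecker_mul :
    trace M * trace N - trace (ptrace2 M * ptrace2 N) - trace (ptrace1 M * ptrace1 N)
        + trace (M * N) =
      trace (M ⊗ₖ N * regroupKronecker (1 - swapMatrix A) (1 - swapMatrix B)) := by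
  rw [regroupKronecker_sub_left, regroupKronecker_sub_right, regroupKronecker_sub_right]
  simp only [Matrix.mul_sub, trace_sub, trace_kronecker_mul_regroupKronecker_one_one,
    trace_kronecker_mul_regroupKronecker_swap_one, trace_kronecker_mul_regroupKronecker_one_swap,
    trace_kronecker_mul_regroupKronecker_swap_swap]
  abel

end TwoParties

/-- The shadow inequality for `n = 2` parties and `T = {1,2}`:
for positive semidefinite `M`, `N` on `ℂ^{D₁} ⊗ ℂ^{D₂}`,
`Tr(M)Tr(N) − Tr[Tr₂(M)Tr₂(N)] − Tr[Tr₁(M)Tr₁(N)] + Tr(MN) ≥ 0`. -/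
theorem shadow_inequality_two_parties (D1 D2 : ℕ)
    (M N : Matrix (Fin D1 × Fin D2) (Fin D1 × Fin D2) ℂ)
    (hM : M.PosSemidef) (hN : N.PosSemidef) :
    0 ≤ Matrix.trace M * Matrix.trace N
        - Matrix.trace (ptrace2 M * ptrace2 N)
        - Matrix.trace (ptrace1 M * ptrace1 N)
        + Matrix.trace (M * N) := by
  rw [shadow_expression_eq_trace_kronecker_mul]
  exact (hM.kronecker hN).trace_mul_nonneg
    (posSemidef_one_sub_swapMatrix.regroupKronecker posSemidef_one_sub_swapMatrix)
end

section
/- For an AME state on 4 qubits (a pure state on (C^2)^{⊗4} all of whose 2-party reductions are maximally mixed), the alternating sum S_0 = Σ_{k=0}^4 (−1)^k C(4,k) 2^{−min(k,4−k)} evaluates to −1/2; since the shadow inequality requires S_0 ≥ 0, no AME state on 4 qubits exists. -/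
open Matrix BigOperators

/-- Merge a configuration on a subset `S` with one on its complement into a full
configuration. -/
def mergeFn {n D : ℕ} (S : Finset (Fin n)) (a : {i // i ∈ S} → Fin D)
    (c : {i // i ∉ S} → Fin D) : Fin n → Fin D :=
  fun i => if h : i ∈ S then a ⟨i, h⟩ else c ⟨i, h⟩

/-- Reduced (traced-down) matrix of `ρ` on the subsystem labelled by `S`. -/
noncomputable def reduceTo {n D : ℕ} (S : Finset (Fin n))
    (ρ : Matrix (Fin n → Fin D) (Fin n → Fin D) ℂ) :
    Matrix ({i // i ∈ S} → Fin D) ({i // i ∈ S} → Fin D) ℂ :=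
  Matrix.of fun a b => ∑ c : {i // i ∉ S} → Fin D, ρ (mergeFn S a c) (mergeFn S b c)


/-! For qubits the antisymmetric form `ε = i σ_y` satisfies `ε ⊗ ε = 1 - SWAP`. Applying this
at every site to two copies of `ψ` and expanding `∏ᵢ (1 - SWAPᵢ)` gives the shadow identity
`∑_S (-1)^|S| Tr ρ_S² = |ψᵀ ε^{⊗n} ψ|² ≥ 0`. For a 4-qubit AME state, `Tr ρ_S²` is `1` for
`|S| ∈ {0, 4}` and `1/4` for `|S| = 2`, and it is at least `1/2` for `|S| ∈ {1, 3}`: a one-qubit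
reduction has purity at least `1/2` by Cauchy–Schwarz on its diagonal, and complementary
reductions of a pure state have equal purity. The alternating sum is therefore at most `-1/2`. -/

open ComplexConjugate

section Reduction

variable {n D : ℕ}

lemma sum_eq_sum_mergeFn {M : Type*} [AddCommMonoid M] (S : Finset (Fin n))
    (f : (Fin n → Fin D) → M) :
    ∑ x, f x = ∑ a : {i // i ∈ S} → Fin D, ∑ c : {i // i ∉ S} → Fin D, f (mergeFn S a c) := by
  rw [← (Equiv.piEquivPiSubtypeProd (· ∈ S) fun _ => Fin D).symm.sum_comp,
    Fintype.sum_prod_type]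
  rfl

lemma piecewise_mergeFn (S : Finset (Fin n)) (a b : {i // i ∈ S} → Fin D)
    (c d : {i // i ∉ S} → Fin D) :
    S.piecewise (mergeFn S a c) (mergeFn S b d) = mergeFn S a d := by
  ext i
  by_cases hi : i ∈ S <;> simp [Finset.piecewise, mergeFn, hi]

lemma trace_reduceTo (S : Finset (Fin n)) (ρ : Matrix (Fin n → Fin D) (Fin n → Fin D) ℂ) :
    (reduceTo S ρ).trace = ρ.trace := by
  simp only [Matrix.trace, Matrix.diag, reduceTo, Matrix.of_apply]
  exact (sum_eq_sum_mergeFn S fun x => ρ x x).symm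

end Reduction

section Purity

variable {ι : Type*} [Fintype ι]

/-- Equals `Tr ρ²` when `ρ` is Hermitian. -/
noncomputable def purity (ρ : Matrix ι ι ℂ) : ℝ := ∑ a, ∑ b, Complex.normSq (ρ a b)

lemma purity_nonneg (ρ : Matrix ι ι ℂ) : 0 ≤ purity ρ :=
  Finset.sum_nonneg fun _ _ => Finset.sum_nonneg fun _ _ => Complex.normSq_nonneg _

lemma purity_smul_one [DecidableEq ι] (c : ℂ) :
    purity (c • (1 : Matrix ι ι ℂ)) = Fintype.card ι * Complex.normSq c := by
  simp [purity, Matrix.one_apply, apply_ite Complex.normSq]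

lemma normSq_trace_le_card_mul_purity (ρ : Matrix ι ι ℂ) :
    Complex.normSq ρ.trace ≤ Fintype.card ι * purity ρ := by
  calc Complex.normSq ρ.trace = ‖∑ a, ρ a a‖ ^ 2 := Complex.normSq_eq_norm_sq _
    _ ≤ (∑ a, ‖ρ a a‖) ^ 2 := by gcongr; exact norm_sum_le _ _
    _ ≤ Fintype.card ι * ∑ a, ‖ρ a a‖ ^ 2 := sq_sum_le_card_mul_sum_sq
    _ ≤ Fintype.card ι * purity ρ := by
      unfold purity
      gcongr with a
      simp only [← Complex.normSq_eq_norm_sq]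
      exact Finset.single_le_sum (f := fun b => Complex.normSq (ρ a b))
        (fun b _ => Complex.normSq_nonneg _) (Finset.mem_univ a)

end Purity

section PureState

variable {n D : ℕ}

lemma purity_reduceTo_vecMulVec (S : Finset (Fin n)) (ψ : (Fin n → Fin D) → ℂ) :
    (purity (reduceTo S (Matrix.vecMulVec ψ (star ψ))) : ℂ) =
      ∑ x, ∑ z, ψ x * conj (ψ (S.piecewise z x)) * ψ z * conj (ψ (S.piecewise x z)) := by
  simp only [purity, Complex.ofReal_sum, ← Complex.mul_conj, reduceTo, Matrix.of_apply,
    Matrix.vecMulVec_apply, Pi.star_apply, Complex.star_def, map_sum, map_mul,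
    Complex.conj_conj, Finset.sum_mul_sum]
  rw [sum_eq_sum_mergeFn S]
  simp only [sum_eq_sum_mergeFn S (fun z => _ * conj (ψ (S.piecewise z _)) * ψ z * _),
    piecewise_mergeFn]
  refine Finset.sum_congr rfl fun a _ => ?_
  rw [Finset.sum_comm]
  refine Finset.sum_congr rfl fun b _ => ?_
  refine Finset.sum_congr rfl fun c _ => Finset.sum_congr rfl fun d _ => ?_
  ring

lemma purity_reduceTo_compl (S : Finset (Fin n)) (ψ : (Fin n → Fin D) → ℂ) :
    purity (reduceTo Sᶜ (Matrix.vecMulVec ψ (star ψ))) =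
      purity (reduceTo S (Matrix.vecMulVec ψ (star ψ))) := by
  apply Complex.ofReal_injective
  simp only [purity_reduceTo_vecMulVec, Finset.piecewise_compl]
  refine Finset.sum_congr rfl fun x _ => Finset.sum_congr rfl fun z _ => ?_
  ring

lemma trace_vecMulVec_star (ψ : (Fin n → Fin D) → ℂ) :
    (Matrix.vecMulVec ψ (star ψ)).trace = ((∑ x, Complex.normSq (ψ x) : ℝ) : ℂ) := by
  simp [Matrix.trace, Matrix.vecMulVec_apply, Complex.mul_conj]

lemma purity_reduceTo_empty (ψ : (Fin n → Fin D) → ℂ) :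
    purity (reduceTo ∅ (Matrix.vecMulVec ψ (star ψ))) = (∑ x, Complex.normSq (ψ x)) ^ 2 := by
  apply Complex.ofReal_injective
  rw [purity_reduceTo_vecMulVec]
  simp only [Finset.piecewise_empty, sq, Finset.sum_mul_sum, Complex.ofReal_sum,
    Complex.ofReal_mul, ← Complex.mul_conj]
  refine Finset.sum_congr rfl fun x _ => Finset.sum_congr rfl fun z _ => ?_
  ring

lemma inv_pow_card_le_purity_reduceTo (S : Finset (Fin n)) {ψ : (Fin n → Fin D) → ℂ}
    (hψ : ∑ x, Complex.normSq (ψ x) = 1) :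
    ((D : ℝ) ^ S.card)⁻¹ ≤ purity (reduceTo S (Matrix.vecMulVec ψ (star ψ))) := by
  have h := normSq_trace_le_card_mul_purity (reduceTo S (Matrix.vecMulVec ψ (star ψ)))
  rw [trace_reduceTo, trace_vecMulVec_star, hψ, Complex.ofReal_one, map_one] at h
  simp only [Fintype.card_fun, Fintype.card_coe, Fintype.card_fin, Nat.cast_pow] at h
  rcases (pow_nonneg (Nat.cast_nonneg D : (0 : ℝ) ≤ D) S.card).eq_or_lt with h0 | hpos
  · rw [← h0, _root_.inv_zero]
    exact purity_nonneg _
  · rwa [inv_le_iff_one_le_mul₀' hpos]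

lemma inv_pow_card_compl_le_purity_reduceTo (S : Finset (Fin n)) {ψ : (Fin n → Fin D) → ℂ}
    (hψ : ∑ x, Complex.normSq (ψ x) = 1) :
    ((D : ℝ) ^ Sᶜ.card)⁻¹ ≤ purity (reduceTo S (Matrix.vecMulVec ψ (star ψ))) := by
  rw [← purity_reduceTo_compl]
  exact inv_pow_card_le_purity_reduceTo Sᶜ hψ

end PureState

section Qubits

variable {n : ℕ}

/-- `i σ_y`. -/
def symplecticForm : Matrix (Fin 2) (Fin 2) ℂ := !![0, 1; -1, 0]

lemma symplecticForm_mul_symplecticForm (a b c d : Fin 2) :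
    symplecticForm a c * symplecticForm b d =
      -(if b = c ∧ d = a then 1 else 0) + (if b = a ∧ d = c then 1 else 0) := by
  fin_cases a <;> fin_cases b <;> fin_cases c <;> fin_cases d <;> simp [symplecticForm]

lemma conj_symplecticForm (a b : Fin 2) : conj (symplecticForm a b) = symplecticForm a b := by
  fin_cases a <;> fin_cases b <;> simp [symplecticForm]

lemma prod_symplecticForm_mul_symplecticForm (x z y w : Fin n → Fin 2) :
    ∏ i, symplecticForm (x i) (z i) * symplecticForm (y i) (w i) =
      ∑ t : Finset (Fin n), (-1) ^ t.card *
        if y = t.piecewise z x ∧ w = t.piecewise x z then 1 else 0 := by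
  simp only [symplecticForm_mul_symplecticForm, Finset.prod_add, Finset.powerset_univ,
    Finset.prod_neg, mul_assoc]
  refine Finset.sum_congr rfl fun t _ => congrArg _ ?_
  have hsplit := Finset.prod_piecewise Finset.univ t
    (fun i => if y i = z i ∧ w i = x i then (1 : ℂ) else 0)
    (fun i => if y i = x i ∧ w i = z i then 1 else 0)
  rw [Finset.univ_inter] at hsplit
  rw [← hsplit]
  calc _ = ∏ i, if y i = t.piecewise z x i ∧ w i = t.piecewise x z i then (1 : ℂ) else 0 :=
        Finset.prod_congr rfl fun i _ => by by_cases hi : i ∈ t <;> simp [hi]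
    _ = _ := by simp only [Fintype.prod_boole, forall_and, ← funext_iff]

lemma sum_sum_mul_prod_symplecticForm (f : (Fin n → Fin 2) → ℂ) (x z : Fin n → Fin 2) :
    ∑ y, ∑ w, f y * f w * ∏ i, symplecticForm (x i) (z i) * symplecticForm (y i) (w i) =
      ∑ t : Finset (Fin n), (-1) ^ t.card * f (t.piecewise z x) * f (t.piecewise x z) := by
  simp only [prod_symplecticForm_mul_symplecticForm, Finset.mul_sum]
  rw [Finset.sum_congr rfl fun y _ => Finset.sum_comm, Finset.sum_comm]
  refine Finset.sum_congr rfl fun t _ => ?_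
  simp only [ite_and, mul_ite, mul_one, mul_zero, Finset.sum_ite_irrel, Finset.sum_ite_eq',
    Finset.mem_univ, if_true, Finset.sum_const_zero]
  ring

/-- `ψᵀ ε^{⊗n} ψ`; for even `n` its squared modulus is the `n`-tangle of Wong and Christensen. -/
noncomputable def flipOverlap (ψ : (Fin n → Fin 2) → ℂ) : ℂ :=
  ∑ x, ∑ z, ψ x * ψ z * ∏ i, symplecticForm (x i) (z i)

theorem sum_neg_one_pow_mul_purity_reduceTo (ψ : (Fin n → Fin 2) → ℂ) :
    ∑ t : Finset (Fin n), (-1) ^ t.card * purity (reduceTo t (Matrix.vecMulVec ψ (star ψ))) =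
      Complex.normSq (flipOverlap ψ) := by
  apply Complex.ofReal_injective
  push_cast
  simp only [purity_reduceTo_vecMulVec, ← Complex.mul_conj]
  have hconj : conj (flipOverlap ψ) =
      ∑ y, ∑ w, conj (ψ y) * conj (ψ w) * ∏ i, symplecticForm (y i) (w i) := by
    simp only [flipOverlap, map_sum, map_mul, map_prod, conj_symplecticForm]
  symm
  calc flipOverlap ψ * conj (flipOverlap ψ)
      = ∑ x, ∑ z, ψ x * ψ z * ∑ y, ∑ w, conj (ψ y) * conj (ψ w) *
          ∏ i, symplecticForm (x i) (z i) * symplecticForm (y i) (w i) := by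
        rw [hconj, flipOverlap, Finset.sum_mul]
        refine Finset.sum_congr rfl fun x _ => ?_
        rw [Finset.sum_mul]
        refine Finset.sum_congr rfl fun z _ => ?_
        simp only [Finset.mul_sum, Finset.prod_mul_distrib]
        refine Finset.sum_congr rfl fun y _ => Finset.sum_congr rfl fun w _ => ?_
        ring
    _ = ∑ x, ∑ z, ψ x * ψ z * ∑ t : Finset (Fin n),
          (-1) ^ t.card * conj (ψ (t.piecewise z x)) * conj (ψ (t.piecewise x z)) := by
        simp only [sum_sum_mul_prod_symplecticForm]
    _ = _ := by
        simp only [Finset.mul_sum]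
        rw [Finset.sum_congr rfl fun x _ => Finset.sum_comm, Finset.sum_comm]
        refine Finset.sum_congr rfl fun t _ => ?_
        refine Finset.sum_congr rfl fun x _ => Finset.sum_congr rfl fun z _ => ?_
        ring

end Qubits

lemma neg_one_pow_mul_purity_le_of_fourQubitAME {ψ : (Fin 4 → Fin 2) → ℂ}
    (hψ : ∑ x, Complex.normSq (ψ x) = 1)
    (hAME : ∀ S : Finset (Fin 4), S.card = 2 →
      reduceTo S (Matrix.vecMulVec ψ (star ψ)) = ((1 : ℂ) / 4) • 1)
    (t : Finset (Fin 4)) :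
    (-1 : ℝ) ^ t.card * purity (reduceTo t (Matrix.vecMulVec ψ (star ψ))) ≤
      (-1 : ℝ) ^ t.card * (2 : ℝ) ^ (-(min t.card (4 - t.card) : ℤ)) := by
  have hpure : purity (reduceTo ∅ (Matrix.vecMulVec ψ (star ψ))) = 1 := by
    rw [purity_reduceTo_empty, hψ, one_pow]
  have hcompl : tᶜ.card = 4 - t.card := by simp [Finset.card_compl]
  obtain h | h | h | h | h : t.card = 0 ∨ t.card = 1 ∨ t.card = 2 ∨ t.card = 3 ∨ t.card = 4 := by
    have := t.card_le_univ; simp only [Fintype.card_fin] at this; omega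
  · rw [Finset.card_eq_zero.mp h, hpure]; simp
  · have := inv_pow_card_le_purity_reduceTo t hψ
    rw [h] at this ⊢; norm_num at this ⊢; linarith
  · rw [hAME t h, purity_smul_one]
    simp [h]; norm_num
  · have := inv_pow_card_compl_le_purity_reduceTo t hψ
    rw [hcompl, h] at this; rw [h]; norm_num at this ⊢; linarith
  · rw [Finset.eq_univ_of_card t (by simpa using h), ← Finset.compl_empty, purity_reduceTo_compl,
      hpure]
    simp

/-- The shadow coefficient `S₀ = ∑_{k=0}^4 (−1)^k C(4,k) 2^{−min(k,4−k)}` of a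
hypothetical 4-qubit AME state equals `−1/2`; since the shadow inequality requires
`S₀ ≥ 0`, no AME state on 4 qubits exists (no pure state on `(ℂ²)^{⊗4}` has all its
two-party reductions maximally mixed). -/
theorem no_four_qubit_AME :
    (∑ k ∈ Finset.range 5,
        (-1 : ℝ) ^ k * (Nat.choose 4 k : ℝ) * (2 : ℝ) ^ (-(min k (4 - k) : ℤ))
      = -1 / 2) ∧
    ¬ ∃ ψ : (Fin 4 → Fin 2) → ℂ,
        (∑ x, Complex.normSq (ψ x) = 1) ∧
        ∀ S : Finset (Fin 4), S.card = 2 →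
          reduceTo S (Matrix.of fun x y => ψ x * (starRingEnd ℂ) (ψ y))
            = ((1 : ℂ) / 4) • 1 := by
  have hS₀ : ∑ k ∈ Finset.range 5,
      (-1 : ℝ) ^ k * (Nat.choose 4 k : ℝ) * (2 : ℝ) ^ (-(min k (4 - k) : ℤ)) = -1 / 2 := by
    norm_num [Finset.sum_range_succ, Nat.choose]
  refine ⟨hS₀, ?_⟩
  rintro ⟨ψ, hψ, hAME⟩
  have hshadow := Finset.sum_le_sum fun t (_ : t ∈ Finset.univ) =>
    neg_one_pow_mul_purity_le_of_fourQubitAME hψ hAME t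
  rw [sum_neg_one_pow_mul_purity_reduceTo, ← Finset.powerset_univ,
    Finset.sum_powerset_apply_card (fun k => (-1 : ℝ) ^ k * (2 : ℝ) ^ (-(min k (4 - k) : ℤ)))]
    at hshadow
  simp only [Finset.card_univ, Fintype.card_fin, nsmul_eq_mul] at hshadow
  have hneg := hshadow.trans_eq ((Finset.sum_congr rfl fun k _ => by ring).trans hS₀)
  linarith [Complex.normSq_nonneg (flipOverlap ψ)]
end

section
/- The state |φ_{2333}⟩ on C^2 ⊗ C^3 ⊗ C^3 ⊗ C^3, defined with coefficients ±a, ±b on the 24 listed computational basis vectors where 12(a^2+b^2) = 1 and 54ab = 1 with a,b real, is normalized and has all two-party and one-party reductions that do not exceed the dimension of their complement maximally mixed; i.e., ρ_{AB} = ρ_{AC} = ρ_{AD} = 1/6 and ρ_B = ρ_C = ρ_D = 1/3, so it is maximally entangled across every bipartition. -/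
open Matrix BigOperators

/-- Coefficient table of the state `|φ₂₃₃₃⟩` (indices given as natural numbers). -/
noncomputable def coeff2333 (a b : ℝ) : ℕ → ℕ → ℕ → ℕ → ℂ
  | 0, 0, 1, 1 => -(a : ℂ)
  | 0, 0, 1, 2 => -(b : ℂ)
  | 0, 0, 2, 1 => (b : ℂ)
  | 0, 0, 2, 2 => (a : ℂ)
  | 0, 1, 0, 1 => -(b : ℂ)
  | 0, 1, 0, 2 => (a : ℂ)
  | 0, 1, 1, 0 => (b : ℂ)
  | 0, 1, 2, 0 => (a : ℂ)
  | 0, 2, 0, 1 => -(a : ℂ)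
  | 0, 2, 0, 2 => (b : ℂ)
  | 0, 2, 1, 0 => -(a : ℂ)
  | 0, 2, 2, 0 => -(b : ℂ)
  | 1, 0, 1, 1 => -(b : ℂ)
  | 1, 0, 1, 2 => (a : ℂ)
  | 1, 0, 2, 1 => -(a : ℂ)
  | 1, 0, 2, 2 => (b : ℂ)
  | 1, 1, 0, 1 => (a : ℂ)
  | 1, 1, 0, 2 => (b : ℂ)
  | 1, 1, 1, 0 => -(a : ℂ)
  | 1, 1, 2, 0 => (b : ℂ)
  | 1, 2, 0, 1 => -(b : ℂ)
  | 1, 2, 0, 2 => -(a : ℂ)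
  | 1, 2, 1, 0 => -(b : ℂ)
  | 1, 2, 2, 0 => (a : ℂ)
  | _, _, _, _ => 0

/-- The state `|φ₂₃₃₃⟩` on `ℂ² ⊗ ℂ³ ⊗ ℂ³ ⊗ ℂ³`. -/
noncomputable def phi2333 (a b : ℝ) : Fin 2 × Fin 3 × Fin 3 × Fin 3 → ℂ :=
  fun x => coeff2333 a b x.1 x.2.1 x.2.2.1 x.2.2.2

/-- The pure density matrix of `|φ₂₃₃₃⟩`. -/
noncomputable def rho2333 (a b : ℝ) :
    Matrix (Fin 2 × Fin 3 × Fin 3 × Fin 3) (Fin 2 × Fin 3 × Fin 3 × Fin 3) ℂ :=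
  Matrix.of fun x y => phi2333 a b x * (starRingEnd ℂ) (phi2333 a b y)

/-- Reduction onto parties `A` and `B`. -/
noncomputable def rhoAB (a b : ℝ) : Matrix (Fin 2 × Fin 3) (Fin 2 × Fin 3) ℂ :=
  Matrix.of fun p q => ∑ k : Fin 3, ∑ l : Fin 3,
    rho2333 a b (p.1, p.2, k, l) (q.1, q.2, k, l)

/-- Reduction onto parties `A` and `C`. -/
noncomputable def rhoAC (a b : ℝ) : Matrix (Fin 2 × Fin 3) (Fin 2 × Fin 3) ℂ :=
  Matrix.of fun p q => ∑ k : Fin 3, ∑ l : Fin 3,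
    rho2333 a b (p.1, k, p.2, l) (q.1, k, q.2, l)

/-- Reduction onto parties `A` and `D`. -/
noncomputable def rhoAD (a b : ℝ) : Matrix (Fin 2 × Fin 3) (Fin 2 × Fin 3) ℂ :=
  Matrix.of fun p q => ∑ k : Fin 3, ∑ l : Fin 3,
    rho2333 a b (p.1, k, l, p.2) (q.1, k, l, q.2)

/-- Reduction onto party `B`. -/
noncomputable def rhoB (a b : ℝ) : Matrix (Fin 3) (Fin 3) ℂ :=
  Matrix.of fun p q => ∑ i : Fin 2, ∑ k : Fin 3, ∑ l : Fin 3,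
    rho2333 a b (i, p, k, l) (i, q, k, l)

/-- Reduction onto party `C`. -/
noncomputable def rhoC (a b : ℝ) : Matrix (Fin 3) (Fin 3) ℂ :=
  Matrix.of fun p q => ∑ i : Fin 2, ∑ k : Fin 3, ∑ l : Fin 3,
    rho2333 a b (i, k, p, l) (i, k, q, l)

/-- Reduction onto party `D`. -/
noncomputable def rhoD (a b : ℝ) : Matrix (Fin 3) (Fin 3) ℂ :=
  Matrix.of fun p q => ∑ i : Fin 2, ∑ k : Fin 3, ∑ l : Fin 3,
    rho2333 a b (i, k, l, p) (i, k, l, q)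

/-! The state is `a • aSigns + b • bSigns` for two tensors of signs. Across each of the cuts
`AB|CD`, `AC|BD`, `AD|BC`, both sign tensors, reshaped to `6 × 9` matrices `U` and `V`, have
orthogonal rows of squared length `2`, and `U Vᵀ` is antisymmetric. Hence the `ab` cross terms
cancel and the reshaped state `M` has `ρ = M Mᴴ = 2 (a² + b²) • 1 = 1/6 • 1`. Tracing out `A`
gives `1/3 • 1` on each qutrit, and the trace of `ρ_AB` is the squared norm of the state. -/

section Gram

variable {m n : Type*} [Fintype n]

theorem map_intCast_mul_conjTranspose (P Q : Matrix m n ℤ) :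
    P.map (Int.castRingHom ℂ) * (Q.map (Int.castRingHom ℂ))ᴴ =
      (P * Qᵀ).map (Int.castRingHom ℂ) := by
  ext i j
  simp [mul_apply]

theorem smul_add_smul_mul_conjTranspose_self [DecidableEq m] {U V : Matrix m n ℤ} {c : ℤ}
    (hU : U * Uᵀ = c • 1) (hV : V * Vᵀ = c • 1) (hUV : U * Vᵀ + V * Uᵀ = 0) (a b : ℝ) :
    ((a : ℂ) • U.map (Int.castRingHom ℂ) + (b : ℂ) • V.map (Int.castRingHom ℂ)) *
        ((a : ℂ) • U.map (Int.castRingHom ℂ) + (b : ℂ) • V.map (Int.castRingHom ℂ))ᴴ =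
      ((c : ℂ) * ((a : ℂ) ^ 2 + (b : ℂ) ^ 2)) • (1 : Matrix m m ℂ) := by
  have hVU : V * Uᵀ = -(U * Vᵀ) := eq_neg_of_add_eq_zero_right hUV
  simp only [conjTranspose_add, conjTranspose_smul, Complex.star_def, Complex.conj_ofReal,
    Matrix.add_mul, Matrix.mul_add, Matrix.smul_mul, Matrix.mul_smul,
    map_intCast_mul_conjTranspose, hU, hV, hVU]
  have hc : (c • (1 : Matrix m m ℤ)).map (Int.castRingHom ℂ) = (c : ℂ) • 1 := by
    ext i j
    by_cases h : i = j <;> simp [one_apply, h, -zsmul_one]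
  rw [hc, Matrix.map_neg _ (map_neg _)]
  module

end Gram

def aSigns : Fin 2 × Fin 3 × Fin 3 × Fin 3 → ℤ
  | (0, 0, 1, 1) => -1
  | (0, 0, 2, 2) => 1
  | (0, 1, 0, 2) => 1
  | (0, 1, 2, 0) => 1
  | (0, 2, 0, 1) => -1
  | (0, 2, 1, 0) => -1
  | (1, 0, 1, 2) => 1
  | (1, 0, 2, 1) => -1
  | (1, 1, 0, 1) => 1
  | (1, 1, 1, 0) => -1
  | (1, 2, 0, 2) => -1
  | (1, 2, 2, 0) => 1
  | _ => 0

def bSigns : Fin 2 × Fin 3 × Fin 3 × Fin 3 → ℤ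
  | (0, 0, 1, 2) => -1
  | (0, 0, 2, 1) => 1
  | (0, 1, 0, 1) => -1
  | (0, 1, 1, 0) => 1
  | (0, 2, 0, 2) => 1
  | (0, 2, 2, 0) => -1
  | (1, 0, 1, 1) => -1
  | (1, 0, 2, 2) => 1
  | (1, 1, 0, 2) => 1
  | (1, 1, 2, 0) => 1
  | (1, 2, 0, 1) => -1
  | (1, 2, 1, 0) => -1
  | _ => 0

theorem phi2333_apply (a b : ℝ) (x : Fin 2 × Fin 3 × Fin 3 × Fin 3) :
    phi2333 a b x = a * aSigns x + b * bSigns x := by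
  obtain ⟨i, j, k, l⟩ := x
  fin_cases i <;> fin_cases j <;> fin_cases k <;> fin_cases l <;>
    simp [phi2333, coeff2333, aSigns, bSigns]

section Reshape

variable {m n X R : Type*}

def reshape (e : m → n → X) (ψ : X → R) : Matrix m n R := of fun p x => ψ (e p x)

theorem reshape_phi2333 (e : m → n → Fin 2 × Fin 3 × Fin 3 × Fin 3) (a b : ℝ) :
    reshape e (phi2333 a b) =
      (a : ℂ) • (reshape e aSigns).map (Int.castRingHom ℂ) +
        (b : ℂ) • (reshape e bSigns).map (Int.castRingHom ℂ) := by
  ext p x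
  simp [reshape, phi2333_apply]

theorem reshape_phi2333_mul_conjTranspose_self [Fintype n] [DecidableEq m]
    (e : m → n → Fin 2 × Fin 3 × Fin 3 × Fin 3)
    (hA : reshape e aSigns * (reshape e aSigns)ᵀ = (2 : ℤ) • 1)
    (hB : reshape e bSigns * (reshape e bSigns)ᵀ = (2 : ℤ) • 1)
    (hAB : reshape e aSigns * (reshape e bSigns)ᵀ + reshape e bSigns * (reshape e aSigns)ᵀ = 0)
    (a b : ℝ) :
    reshape e (phi2333 a b) * (reshape e (phi2333 a b))ᴴ =
      (2 * ((a : ℂ) ^ 2 + (b : ℂ) ^ 2)) • 1 := by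
  rw [reshape_phi2333]
  simpa using smul_add_smul_mul_conjTranspose_self hA hB hAB a b

end Reshape

def indexAB (p : Fin 2 × Fin 3) (x : Fin 3 × Fin 3) : Fin 2 × Fin 3 × Fin 3 × Fin 3 :=
  (p.1, p.2, x.1, x.2)

def indexAC (p : Fin 2 × Fin 3) (x : Fin 3 × Fin 3) : Fin 2 × Fin 3 × Fin 3 × Fin 3 :=
  (p.1, x.1, p.2, x.2)

def indexAD (p : Fin 2 × Fin 3) (x : Fin 3 × Fin 3) : Fin 2 × Fin 3 × Fin 3 × Fin 3 :=
  (p.1, x.1, x.2, p.2)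

theorem rhoAB_eq_reshape (a b : ℝ) :
    rhoAB a b = reshape indexAB (phi2333 a b) * (reshape indexAB (phi2333 a b))ᴴ := by
  ext p q
  simp [rhoAB, rho2333, reshape, indexAB, mul_apply, Fintype.sum_prod_type]

theorem rhoAC_eq_reshape (a b : ℝ) :
    rhoAC a b = reshape indexAC (phi2333 a b) * (reshape indexAC (phi2333 a b))ᴴ := by
  ext p q
  simp [rhoAC, rho2333, reshape, indexAC, mul_apply, Fintype.sum_prod_type]

theorem rhoAD_eq_reshape (a b : ℝ) :
    rhoAD a b = reshape indexAD (phi2333 a b) * (reshape indexAD (phi2333 a b))ᴴ := by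
  ext p q
  simp [rhoAD, rho2333, reshape, indexAD, mul_apply, Fintype.sum_prod_type]

theorem rhoAB_eq (a b : ℝ) : rhoAB a b = (2 * ((a : ℂ) ^ 2 + (b : ℂ) ^ 2)) • 1 := by
  rw [rhoAB_eq_reshape]
  exact reshape_phi2333_mul_conjTranspose_self _ (by decide) (by decide) (by decide) a b

theorem rhoAC_eq (a b : ℝ) : rhoAC a b = (2 * ((a : ℂ) ^ 2 + (b : ℂ) ^ 2)) • 1 := by
  rw [rhoAC_eq_reshape]
  exact reshape_phi2333_mul_conjTranspose_self _ (by decide) (by decide) (by decide) a b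

theorem rhoAD_eq (a b : ℝ) : rhoAD a b = (2 * ((a : ℂ) ^ 2 + (b : ℂ) ^ 2)) • 1 := by
  rw [rhoAD_eq_reshape]
  exact reshape_phi2333_mul_conjTranspose_self _ (by decide) (by decide) (by decide) a b

section PartialTrace

variable {ι κ R : Type*} [Fintype ι]

def traceLeft [AddCommMonoid R] (M : Matrix (ι × κ) (ι × κ) R) : Matrix κ κ R :=
  of fun p q => ∑ i, M (i, p) (i, q)

theorem traceLeft_smul_one [DecidableEq ι] [DecidableEq κ] [Semiring R] (c : R) :
    traceLeft (c • 1 : Matrix (ι × κ) (ι × κ) R) = (Fintype.card ι * c) • 1 := by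
  ext p q
  by_cases h : p = q <;> simp [traceLeft, one_apply, h]

end PartialTrace

theorem rhoB_eq_traceLeft (a b : ℝ) : rhoB a b = traceLeft (rhoAB a b) := rfl

theorem rhoC_eq_traceLeft (a b : ℝ) : rhoC a b = traceLeft (rhoAC a b) := rfl

theorem rhoD_eq_traceLeft (a b : ℝ) : rhoD a b = traceLeft (rhoAD a b) := rfl

theorem sum_normSq_phi2333_eq_trace_rhoAB (a b : ℝ) :
    ((∑ x, Complex.normSq (phi2333 a b x) : ℝ) : ℂ) = (rhoAB a b).trace := by
  simp [trace, rhoAB, rho2333, Fintype.sum_prod_type, Complex.mul_conj]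

theorem phi2333_is_AME_general (a b : ℝ)
    (h1 : 12 * (a ^ 2 + b ^ 2) = 1) :
    (∑ x, Complex.normSq (phi2333 a b x) = 1) ∧
    rhoAB a b = ((1 : ℂ) / 6) • 1 ∧
    rhoAC a b = ((1 : ℂ) / 6) • 1 ∧
    rhoAD a b = ((1 : ℂ) / 6) • 1 ∧
    rhoB a b = ((1 : ℂ) / 3) • 1 ∧
    rhoC a b = ((1 : ℂ) / 3) • 1 ∧
    rhoD a b = ((1 : ℂ) / 3) • 1 := by
  have hc : 2 * ((a : ℂ) ^ 2 + (b : ℂ) ^ 2) = 1 / 6 := by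
    have h1' : 12 * ((a : ℂ) ^ 2 + (b : ℂ) ^ 2) = 1 := by exact_mod_cast h1
    linear_combination h1' / 6
  have hAB : rhoAB a b = ((1 : ℂ) / 6) • 1 := by rw [rhoAB_eq, hc]
  have hAC : rhoAC a b = ((1 : ℂ) / 6) • 1 := by rw [rhoAC_eq, hc]
  have hAD : rhoAD a b = ((1 : ℂ) / 6) • 1 := by rw [rhoAD_eq, hc]
  have hnorm : ((∑ x, Complex.normSq (phi2333 a b x) : ℝ) : ℂ) = 1 := by
    rw [sum_normSq_phi2333_eq_trace_rhoAB, hAB, trace_smul, trace_one]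
    norm_num
  refine ⟨mod_cast hnorm, hAB, hAC, hAD, ?_, ?_, ?_⟩
  · rw [rhoB_eq_traceLeft, hAB, traceLeft_smul_one]; norm_num
  · rw [rhoC_eq_traceLeft, hAC, traceLeft_smul_one]; norm_num
  · rw [rhoD_eq_traceLeft, hAD, traceLeft_smul_one]; norm_num

/-- The state `|φ₂₃₃₃⟩` with real coefficients `a`, `b` satisfying
`12(a²+b²) = 1` and `54ab = 1` is normalized and has
`ρ_AB = ρ_AC = ρ_AD = 𝟙/6` and `ρ_B = ρ_C = ρ_D = 𝟙/3`, i.e. it is maximally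
entangled across every bipartition. -/
theorem phi2333_is_AME (a b : ℝ)
    (h1 : 12 * (a ^ 2 + b ^ 2) = 1) (h2 : 54 * a * b = 1) :
    (∑ x, Complex.normSq (phi2333 a b x) = 1) ∧
    rhoAB a b = ((1 : ℂ) / 6) • 1 ∧
    rhoAC a b = ((1 : ℂ) / 6) • 1 ∧
    rhoAD a b = ((1 : ℂ) / 6) • 1 ∧
    rhoB a b = ((1 : ℂ) / 3) • 1 ∧
    rhoC a b = ((1 : ℂ) / 3) • 1 ∧
    rhoD a b = ((1 : ℂ) / 3) • 1 :=
  phi2333_is_AME_general a b h1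
end
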